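/- Let A and B be finite sets, C a set, and T = (Q, δ) a Turing automaton of sort (A ⊕ B) ⊕ (A ⊕ B) ⊕ C. Let ρ be the bijection from (A ⊕ B) ⊕ (A ⊕ B) ⊕ C to (A ⊕ A) ⊕ (B ⊕ B) ⊕ C that keeps the first A, interchanges the first B with the second A, keeps the second B, and fixes C (i.e., the permutation 1_A ⊗ c_{B,A} ⊗ 1_{B⊕C}). Then κ_{A⊕B} T = κ_B(κ_A(T · ρ)) as Turing automata of sort C: both have state set Q and their transition relations coincide. (Vanishing, axiom I7, for Turing automata.) -/

import Mathlib

/-!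
Kleene elimination of a set `S` of letters computes the walks of the automaton that may
leave through an interface `⟨z,i⟩` with `z ∈ S` and come back through the opposite interface
`⟨z,3-i⟩`. This description does not depend on the order in which the letters are
eliminated, and it commutes with relabelling the interfaces. Both sides of vanishing therefore
describe the walks through the feedback loops of all letters of `A ⊕ B`: the left side
eliminates them at once, the right side first those of `A` and then those of `B`.
-/

/-- The transition relation of a Turing automaton of sort `X`: a relation
`δ ⊆ (Q × X_*)²`, where `X_* = X ⊕ {*}` is modeled as `Option X`, with `none` the anchor. -/
def TRel (Q X : Type*) : Type _ := (Q × Option X) → (Q × Option X) → Prop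

/-- Relational composition (product of the semiring of binary relations on `Q`). -/
def rcomp {Q : Type*} (r s : Q → Q → Prop) : Q → Q → Prop := fun a c => ∃ b, r a b ∧ s b c

/-- Union of relations (sum of the semiring of binary relations on `Q`). -/
def runion {Q : Type*} (r s : Q → Q → Prop) : Q → Q → Prop := fun a b => r a b ∨ s a b

/-- 2×2 matrices of binary relations on `Q`. -/
def Mat2 (Q : Type*) : Type _ := Fin 2 → Fin 2 → (Q → Q → Prop)

/-- The transposition of indices used to interchange the two rows of a matrix. -/
def swap2 : Fin 2 → Fin 2 := fun i => if i = 0 then 1 else 0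

/-- Alternating matrix product `M ⊙ N := M · (σN)`, where `σN` interchanges the rows of `N`. -/
def altMul {Q : Type*} (M N : Mat2 Q) : Mat2 Q :=
  fun i j => runion (rcomp (M i 0) (N (swap2 0) j)) (rcomp (M i 1) (N (swap2 1) j))

/-- `U⁰ := σI₂`: identity relations off the diagonal, empty relations on the diagonal. -/
def altOne {Q : Type*} : Mat2 Q := fun i j => if i = j then (fun _ _ => False) else Eq

/-- Alternating matrix powers: `U⁰ = σI₂`, `U^(n+1) = Uⁿ ⊙ U`. -/
def altPow {Q : Type*} (U : Mat2 Q) : ℕ → Mat2 Q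
  | 0 => altOne
  | n + 1 => altMul (altPow U n) U

/-- Alternating product of a row vector with a matrix: `u ⊙ M := u · (σM)`. -/
def altRowMul {Q : Type*} (u : Fin 2 → Q → Q → Prop) (M : Mat2 Q) : Fin 2 → Q → Q → Prop :=
  fun j => runion (rcomp (u 0) (M (swap2 0) j)) (rcomp (u 1) (M (swap2 1) j))

/-- Alternating product of a row vector with a column vector: `u ⊙ v := u · (σv)`. -/
def altRowCol {Q : Type*} (u v : Fin 2 → Q → Q → Prop) : Q → Q → Prop :=
  runion (rcomp (u 0) (v (swap2 0))) (rcomp (u 1) (v (swap2 1)))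

/-- A family `λ_{x,y}` of binary relations on `Q` indexed by pairs of interfaces. -/
def LamFamily (Q X : Type*) : Type _ := Option X → Option X → (Q → Q → Prop)

/-- The base case of the Kleene elimination: `λ^∅_{x,y} = {(q,r) | ((q,x),(r,y)) ∈ δ}`. -/
def lamInit {Q A B : Type*} (δ : TRel Q (A ⊕ A ⊕ B)) : LamFamily Q (A ⊕ A ⊕ B) :=
  fun x y q r => δ (q, x) (r, y)

/-- One Kleene elimination step at `z ∈ A`:
`λ^(C∪{z})_{x,y} := λ^C_{x,y} ∪ ⋃_{n≥0} u ⊙ Uⁿ ⊙ v` with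
`u = (λ^C_{x,⟨z,1⟩}, λ^C_{x,⟨z,2⟩})`, `v = (λ^C_{⟨z,1⟩,y}; λ^C_{⟨z,2⟩,y})` and
`U = (λ^C_{⟨z,i⟩,⟨z,j⟩})_{i,j}`. -/
def elimStep {Q A B : Type*} (lam : LamFamily Q (A ⊕ A ⊕ B)) (z : A) :
    LamFamily Q (A ⊕ A ⊕ B) :=
  fun x y =>
    let p : Fin 2 → Option (A ⊕ A ⊕ B) := ![some (Sum.inl z), some (Sum.inr (Sum.inl z))]
    let u : Fin 2 → Q → Q → Prop := fun i => lam x (p i)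
    let U : Mat2 Q := fun i j => lam (p i) (p j)
    let v : Fin 2 → Q → Q → Prop := fun i => lam (p i) y
    runion (lam x y) (fun q r => ∃ n, altRowCol (altRowMul u (altPow U n)) v q r)

/-- Kleene elimination along a list of elements of `A`. -/
def lamList {Q A B : Type*} (δ : TRel Q (A ⊕ A ⊕ B)) : List A → LamFamily Q (A ⊕ A ⊕ B)
  | [] => lamInit δ
  | z :: L => elimStep (lamList δ L) z

/-- The trace `κ_A T` of a Turing automaton of sort `A ⊕ A ⊕ B` (`A` finite): its
transitions are `((q,b),(r,b'))` iff `(q,r) ∈ λ^A_{b,b'}`. -/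
def kappa {Q A B : Type*} [Fintype A] (δ : TRel Q (A ⊕ A ⊕ B)) : TRel Q B :=
  fun a b =>
    lamList δ Finset.univ.toList (a.2.map (fun x => Sum.inr (Sum.inr x)))
      (b.2.map (fun x => Sum.inr (Sum.inr x))) a.1 b.1

/-- The relabeling `T · ρ` of a Turing automaton along a bijection `ρ : X ≃ Y`:
`((q, ρ_* x),(r, ρ_* y))` is a transition iff `((q,x),(r,y))` is, where `ρ_*(*) = *`. -/
def relabel {Q X Y : Type*} (ρ : X ≃ Y) (δ : TRel Q X) : TRel Q Y :=
  fun a b => δ (a.1, a.2.map ρ.symm) (b.1, b.2.map ρ.symm)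

/-- The sum `T ⊕ T'` of Turing automata of sorts `X` and `Y`: states `Q × Q'`, and a
transition happens in one component while the other state stays put; anchors identified. -/
def autSum {Q Q' X Y : Type*} (δ : TRel Q X) (δ' : TRel Q' Y) : TRel (Q × Q') (X ⊕ Y) :=
  fun a b =>
    (∃ u v : Option X, a.2 = u.map Sum.inl ∧ b.2 = v.map Sum.inl ∧
      a.1.2 = b.1.2 ∧ δ (a.1.1, u) (b.1.1, v)) ∨
    (∃ u v : Option Y, a.2 = u.map Sum.inr ∧ b.2 = v.map Sum.inr ∧
      a.1.1 = b.1.1 ∧ δ' (a.1.2, u) (b.1.2, v))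

/-- The identity Turing automaton `1_A` of sort `A ⊕ A`: a single state, with transitions
from `⟨a,1⟩` to `⟨a,2⟩` and back for every `a ∈ A`. -/
def idAut (A : Type*) : TRel PUnit (A ⊕ A) :=
  fun a b =>
    (∃ x : A, a.2 = some (Sum.inl x) ∧ b.2 = some (Sum.inr x)) ∨
    (∃ x : A, a.2 = some (Sum.inr x) ∧ b.2 = some (Sum.inl x))

/-- The permutation `c_{A,B⊕B} ⊗ 1_C` rearranging `(A ⊕ B) ⊕ (B ⊕ C)` into
`B ⊕ B ⊕ (A ⊕ C)`, used to define the derived composition. -/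
def compPerm (A B C : Type*) : (A ⊕ B) ⊕ (B ⊕ C) ≃ B ⊕ B ⊕ (A ⊕ C) where
  toFun x := match x with
    | .inl (.inl a) => .inr (.inr (.inl a))
    | .inl (.inr b) => .inl b
    | .inr (.inl b) => .inr (.inl b)
    | .inr (.inr c) => .inr (.inr (.inr c))
  invFun y := match y with
    | .inl b => .inl (.inr b)
    | .inr (.inl b) => .inr (.inl b)
    | .inr (.inr (.inl a)) => .inl (.inl a)
    | .inr (.inr (.inr c)) => .inr (.inr c)
  left_inv x := by rcases x with (a | b) | (b | c) <;> rfl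
  right_inv y := by rcases y with b | (b | (a | c)) <;> rfl

/-- The derived composition `T ∘ T' := κ_B((T ⊕ T') · (c_{A,B⊕B} ⊗ 1_C))` of Turing
automata of sorts `A ⊕ B` and `B ⊕ C` (`B` finite). -/
def compAut {Q Q' A B C : Type*} [Fintype B]
    (δ : TRel Q (A ⊕ B)) (δ' : TRel Q' (B ⊕ C)) : TRel (Q × Q') (A ⊕ C) :=
  kappa (relabel (compPerm A B C) (autSum δ δ'))

/-- The permutation `1_A ⊗ c_{B,A} ⊗ 1_{B⊕C}` rearranging `(A ⊕ B) ⊕ (A ⊕ B) ⊕ C` into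
`A ⊕ A ⊕ B ⊕ B ⊕ C`: it keeps the first `A`, interchanges the first `B` with the second
`A`, keeps the second `B`, and fixes `C`. -/
def vanishPerm (A B C : Type*) : (A ⊕ B) ⊕ (A ⊕ B) ⊕ C ≃ A ⊕ A ⊕ B ⊕ B ⊕ C where
  toFun x := match x with
    | .inl (.inl a) => .inl a
    | .inl (.inr b) => .inr (.inr (.inl b))
    | .inr (.inl (.inl a)) => .inr (.inl a)
    | .inr (.inl (.inr b)) => .inr (.inr (.inr (.inl b)))
    | .inr (.inr c) => .inr (.inr (.inr (.inr c)))
  invFun y := match y with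
    | .inl a => .inl (.inl a)
    | .inr (.inl a) => .inr (.inl (.inl a))
    | .inr (.inr (.inl b)) => .inl (.inr b)
    | .inr (.inr (.inr (.inl b))) => .inr (.inl (.inr b))
    | .inr (.inr (.inr (.inr c))) => .inr (.inr c)
  left_inv x := by rcases x with (a | b) | ((a | b) | c) <;> rfl
  right_inv y := by rcases y with a | (a | (b | (b | c))) <;> rfl

section AlternatingProduct

variable {Q : Type*}

@[simp] lemma swap2_swap2 (i : Fin 2) : swap2 (swap2 i) = i := by fin_cases i <;> rfl

lemma altMul_iff (M N : Mat2 Q) (i j : Fin 2) (q r : Q) :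
    altMul M N i j q r ↔ ∃ a s, M i a q s ∧ N (swap2 a) j s r := by
  simp [altMul, runion, rcomp, Fin.exists_fin_two]

lemma altOne_iff (i j : Fin 2) (q r : Q) : altOne i j q r ↔ i ≠ j ∧ q = r := by
  unfold altOne
  split_ifs <;> simp_all

lemma altOne_altMul (U : Mat2 Q) : altMul altOne U = U := by
  funext i j q r
  apply propext
  simp only [altMul_iff, altOne_iff]
  constructor
  · rintro ⟨a, _, ⟨hne, rfl⟩, h⟩
    fin_cases i <;> fin_cases a <;> simp_all [swap2]
  · intro h
    exact ⟨swap2 i, q, ⟨by fin_cases i <;> decide, rfl⟩, by simpa using h⟩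

lemma altMul_altOne (U : Mat2 Q) : altMul U altOne = U := by
  funext i j q r
  apply propext
  simp only [altMul_iff, altOne_iff]
  constructor
  · rintro ⟨a, _, h, hne, rfl⟩
    fin_cases a <;> fin_cases j <;> simp_all [swap2]
  · intro h
    exact ⟨j, r, h, by fin_cases j <;> decide, rfl⟩

lemma altMul_assoc (M N P : Mat2 Q) : altMul (altMul M N) P = altMul M (altMul N P) := by
  funext i j q r
  apply propext
  simp only [altMul_iff]
  constructor
  · rintro ⟨b, t, ⟨a, s, hM, hN⟩, hP⟩
    exact ⟨a, s, hM, b, t, hN, hP⟩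
  · rintro ⟨a, s, hM, b, t, hN, hP⟩
    exact ⟨b, t, ⟨a, s, hM, hN⟩, hP⟩

lemma altPow_succ' (U : Mat2 Q) (n : ℕ) : altPow U (n + 1) = altMul U (altPow U n) := by
  induction n with
  | zero => exact (altOne_altMul U).trans (altMul_altOne U).symm
  | succ n ih =>
    change altMul (altPow U (n + 1)) U = _
    nth_rewrite 1 [ih]
    rw [altMul_assoc]
    rfl

lemma altRowCol_altRowMul_iff (u : Fin 2 → Q → Q → Prop) (M : Mat2 Q)
    (v : Fin 2 → Q → Q → Prop) (q r : Q) :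
    altRowCol (altRowMul u M) v q r ↔
      ∃ a j s t, u a q s ∧ M (swap2 a) j s t ∧ v (swap2 j) t r := by
  simp only [altRowCol, altRowMul, runion, rcomp, Fin.exists_fin_two]
  grind

end AlternatingProduct

section Walks

variable {Q A B : Type*}

/-- The interfaces `⟨z,1⟩` and `⟨z,2⟩`. -/
def ports (z : A) : Fin 2 → Option (A ⊕ A ⊕ B) :=
  ![some (Sum.inl z), some (Sum.inr (Sum.inl z))]

/-- Walks made of `lam`-steps in which the automaton may leave through a port `⟨z,i⟩`
with `S z` and re-enter through the opposite port `⟨z,3-i⟩`. -/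
inductive KleeneWalk (lam : LamFamily Q (A ⊕ A ⊕ B)) (S : A → Prop) :
    Option (A ⊕ A ⊕ B) → Option (A ⊕ A ⊕ B) → Q → Q → Prop
  | edge {x y q r} : lam x y q r → KleeneWalk lam S x y q r
  | cons {x y q s r} (z : A) (i : Fin 2) : S z → lam x (ports z i) q s →
      KleeneWalk lam S (ports z (swap2 i)) y s r → KleeneWalk lam S x y q r

namespace KleeneWalk

variable {lam : LamFamily Q (A ⊕ A ⊕ B)} {S S' : A → Prop}
  {x y : Option (A ⊕ A ⊕ B)} {q s r : Q}

lemma mono (hS : ∀ w, S w → S' w) (h : KleeneWalk lam S x y q r) :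
    KleeneWalk lam S' x y q r := by
  induction h with
  | edge h => exact edge h
  | cons z i hz h _ ih => exact cons z i (hS z hz) h ih

lemma trans {z : A} {i : Fin 2} (hz : S z) (h₁ : KleeneWalk lam S x (ports z i) q s)
    (h₂ : KleeneWalk lam S (ports z (swap2 i)) y s r) : KleeneWalk lam S x y q r := by
  generalize hm : ports z i = m at h₁
  induction h₁ with
  | edge h => subst hm; exact cons z i hz h h₂
  | cons w j hw h _ ih => exact cons w j hw h (ih h₂ hm)

lemma iff_of_forall_not (hS : ∀ w, ¬ S w) : KleeneWalk lam S x y q r ↔ lam x y q r := by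
  constructor
  · rintro (h | ⟨z, i, hz⟩)
    · exact h
    · exact absurd hz (hS z)
  · exact edge

lemma of_altPow (hS : ∀ w, S w → S' w) {z : A} (hz : S' z) {n : ℕ} {c j : Fin 2} {t : Q}
    (hU : altPow (fun i j => KleeneWalk lam S (ports z i) (ports z j)) n c j s t)
    (hv : KleeneWalk lam S' (ports z (swap2 j)) y t r) :
    KleeneWalk lam S' (ports z c) y s r := by
  induction n generalizing c s with
  | zero =>
    obtain ⟨hne, rfl⟩ := (altOne_iff c j s t).1 hU
    obtain rfl : c = swap2 j := by fin_cases c <;> fin_cases j <;> simp_all [swap2]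
    exact hv
  | succ n ih =>
    obtain ⟨a, s', h, hU⟩ := (altMul_iff _ _ _ _ _ _).1 (altPow_succ' _ n ▸ hU)
    exact trans hz (h.mono hS) (ih hU)

end KleeneWalk

lemma elimStep_eq (lam : LamFamily Q (A ⊕ A ⊕ B)) (z : A) (x y : Option (A ⊕ A ⊕ B)) :
    elimStep lam z x y = runion (lam x y) fun q r => ∃ n, altRowCol
      (altRowMul (fun i => lam x (ports z i)) (altPow (fun i j => lam (ports z i) (ports z j)) n))
      (fun i => lam (ports z i) y) q r :=
  rfl

lemma elimStep_iff (lam : LamFamily Q (A ⊕ A ⊕ B)) (z : A) (x y : Option (A ⊕ A ⊕ B))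
    (q r : Q) :
    elimStep lam z x y q r ↔ lam x y q r ∨ ∃ n a j s t, lam x (ports z a) q s ∧
      altPow (fun i j => lam (ports z i) (ports z j)) n (swap2 a) j s t ∧
      lam (ports z (swap2 j)) y t r := by
  simp only [elimStep_eq, runion, altRowCol_altRowMul_iff]

lemma elimStep_kleeneWalk_iff (lam : LamFamily Q (A ⊕ A ⊕ B)) (S : A → Prop) (z : A)
    (x y : Option (A ⊕ A ⊕ B)) (q r : Q) :
    elimStep (KleeneWalk lam S) z x y q r ↔ KleeneWalk lam (fun w => S w ∨ w = z) x y q r := by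
  have hS : ∀ w, S w → S w ∨ w = z := fun _ => Or.inl
  have hz : S z ∨ z = z := Or.inr rfl
  refine (elimStep_iff _ _ _ _ _ _).trans ?_
  constructor
  · rintro (h | ⟨n, a, j, s, t, hu, hU, hv⟩)
    · exact h.mono hS
    · exact .trans hz (hu.mono hS) (.of_altPow hS hz hU (hv.mono hS))
  · intro h
    induction h with
    | edge h => exact Or.inl (.edge h)
    | @cons x y q s r w i hw h _ ih =>
      rcases hw with hw | rfl
      · rcases ih with ih | ⟨n, a, j, s', t, hu, hU, hv⟩
        · exact Or.inl (.cons w i hw h ih)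
        · exact Or.inr ⟨n, a, j, s', t, .cons w i hw h hu, hU, hv⟩
      · refine Or.inr ?_
        rcases ih with ih | ⟨n, a, j, s', t, hu, hU, hv⟩
        · refine ⟨0, i, i, s, s, .edge h, (altOne_iff _ _ _ _).2 ⟨?_, rfl⟩, ih⟩
          fin_cases i <;> decide
        · refine ⟨n + 1, i, j, s, t, .edge h, ?_, hv⟩
          exact (altPow_succ' _ n).symm ▸ (altMul_iff _ _ _ _ _ _).2 ⟨a, s', hu, hU⟩

end Walks

section ElimList

variable {Q A B : Type*}

def elimList (lam : LamFamily Q (A ⊕ A ⊕ B)) : List A → LamFamily Q (A ⊕ A ⊕ B)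
  | [] => lam
  | z :: L => elimStep (elimList lam L) z

lemma lamList_eq_elimList (δ : TRel Q (A ⊕ A ⊕ B)) (L : List A) :
    lamList δ L = elimList (lamInit δ) L := by
  induction L with
  | nil => rfl
  | cons z L ih => exact congrArg (elimStep · z) ih

lemma elimList_append (lam : LamFamily Q (A ⊕ A ⊕ B)) (L₁ L₂ : List A) :
    elimList lam (L₁ ++ L₂) = elimList (elimList lam L₂) L₁ := by
  induction L₁ with
  | nil => rfl
  | cons z L ih => exact congrArg (elimStep · z) ih

lemma elimList_eq_kleeneWalk (lam : LamFamily Q (A ⊕ A ⊕ B)) (L : List A) :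
    elimList lam L = KleeneWalk lam (· ∈ L) := by
  induction L with
  | nil =>
    funext x y q r
    exact propext (KleeneWalk.iff_of_forall_not fun _ => List.not_mem_nil).symm
  | cons z L ih =>
    funext x y q r
    change elimStep (elimList lam L) z x y q r = _
    rw [ih, elimStep_kleeneWalk_iff]
    congr
    funext w
    simp [or_comm]

lemma elimList_congr (lam : LamFamily Q (A ⊕ A ⊕ B)) {L L' : List A}
    (h : ∀ w, w ∈ L ↔ w ∈ L') : elimList lam L = elimList lam L' := by
  rw [elimList_eq_kleeneWalk, elimList_eq_kleeneWalk]
  congr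
  funext w
  exact propext (h w)

lemma elimList_comap {A' B' : Type*} (g : A' ⊕ A' ⊕ B' → A ⊕ A ⊕ B) (h : A' → A)
    (hg₁ : ∀ z, g (.inl z) = .inl (h z)) (hg₂ : ∀ z, g (.inr (.inl z)) = .inr (.inl (h z)))
    (lam : LamFamily Q (A ⊕ A ⊕ B)) (L : List A') :
    elimList (fun x y => lam (x.map g) (y.map g)) L
      = fun x y => elimList lam (L.map h) (x.map g) (y.map g) := by
  have hports : ∀ z i, (ports z i).map g = ports (B := B) (h z) i := by
    intro z i
    fin_cases i <;> simp [ports, hg₁, hg₂]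
  induction L with
  | nil => rfl
  | cons z L ih =>
    funext x y
    change elimStep (elimList _ L) z x y = elimStep (elimList lam (L.map h)) (h z) _ _
    rw [ih]
    refine (elimStep_eq _ z x y).trans ?_
    simp only [elimStep_eq, hports]

lemma lamList_relabel {A' B' : Type*} (ρ : A ⊕ A ⊕ B ≃ A' ⊕ A' ⊕ B') (h : A' → A)
    (hρ₁ : ∀ z, ρ.symm (.inl z) = .inl (h z))
    (hρ₂ : ∀ z, ρ.symm (.inr (.inl z)) = .inr (.inl (h z)))
    (δ : TRel Q (A ⊕ A ⊕ B)) (L : List A') :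
    lamList (relabel ρ δ) L
      = fun x y => elimList (lamInit δ) (L.map h) (x.map ρ.symm) (y.map ρ.symm) := by
  rw [lamList_eq_elimList]
  exact elimList_comap ρ.symm h hρ₁ hρ₂ (lamInit δ) L

end ElimList

theorem vanishing_general {Q A B C : Type*} [Fintype A] [Fintype B]
    (δ : TRel Q ((A ⊕ B) ⊕ (A ⊕ B) ⊕ C)) :
    kappa δ = kappa (kappa (relabel (vanishPerm A B C) δ)) := by
  set ρ := vanishPerm A B C
  set elimA := elimList (lamInit δ) ((Finset.univ : Finset A).toList.map Sum.inl)
  have hA : ∀ L : List A, lamList (relabel ρ δ) L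
      = fun x y => elimList (lamInit δ) (L.map Sum.inl) (x.map ρ.symm) (y.map ρ.symm) :=
    lamList_relabel ρ Sum.inl (fun _ => rfl) (fun _ => rfl) δ
  have hB : ∀ L : List B, lamList (kappa (relabel ρ δ)) L
      = fun x y => elimList elimA (L.map Sum.inr)
          (x.map fun w => ρ.symm (.inr (.inr w))) (y.map fun w => ρ.symm (.inr (.inr w))) := by
    intro L
    rw [lamList_eq_elimList]
    have hinit : lamInit (kappa (relabel ρ δ))
        = fun x y => elimA (x.map fun w => ρ.symm (.inr (.inr w)))
            (y.map fun w => ρ.symm (.inr (.inr w))) := by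
      funext x y q r
      change lamList (relabel ρ δ) _ _ _ q r = _
      simp only [hA, Option.map_map]
      rfl
    rw [hinit]
    exact elimList_comap _ Sum.inr (fun _ => rfl) (fun _ => rfl) elimA L
  funext a b
  simp only [kappa, hB, Option.map_map, elimA, ← elimList_append, lamList_eq_elimList]
  rw [elimList_congr (lamInit δ) (L := Finset.univ.toList)
    (L' := Finset.univ.toList.map Sum.inr ++ Finset.univ.toList.map Sum.inl)
    (by rintro (a | b) <;> simp)]
  -- `ρ.symm` is the identity on `C`
  rfl

/-- Vanishing (axiom I7) for Turing automata: for a Turing automaton `T` of sort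
`(A ⊕ B) ⊕ (A ⊕ B) ⊕ C`, `κ_{A⊕B} T = κ_B(κ_A(T · ρ))` with
`ρ = 1_A ⊗ c_{B,A} ⊗ 1_{B⊕C}`; both sides have state set `Q` and their transition
relations coincide. -/
theorem vanishing {Q A B C : Type*} [Nonempty Q] [Fintype A] [Fintype B]
    (δ : TRel Q ((A ⊕ B) ⊕ (A ⊕ B) ⊕ C)) :
    kappa δ = kappa (kappa (relabel (vanishPerm A B C) δ)) :=
  vanishing_general δ
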